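/- If a c-formula ψ is UCL-satisfiable, then there exist a valuation v : X → {⊥,⊤} and rational numbers ν̄ and μ̄ with 1/2 < ν̄ ≤ 1 and 1/2 < μ̄ ≤ 1 such that μ̄ ≤ P^v_ψ(ν̄); that is, the interpretation (v, ρ) with ρ(ν) = ν̄ and ρ(μ) = μ̄ satisfies ψ. (Rational witnesses suffice for the model witness problem.) -/

import Mathlib

namespace UCL

/-- The mode of a connective occurrence: the ideal (reliable) connective `c`,
its negated-output counterpart `c̄`, or its unreliable counterpart `c̃`. -/
inductive Mode where
  | ideal | negated | unreliable
deriving DecidableEq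

/-- The binary connectives of the signature. -/
inductive BinConn where
  | and | or | imp | iff
deriving DecidableEq

/-- Formulas over the UCL signature `Σfc` and the set `X` of propositional
variables: constants, variables, negation family, binary connective families,
and the `(3+2k)`-ary majority families (each in one of the three modes). -/
inductive Form (X : Type) where
  | verum : Form X
  | falsum : Form X
  | var : X → Form X
  | not : Mode → Form X → Form X
  | bin : BinConn → Mode → Form X → Form X → Form X
  | maj : (k : ℕ) → Mode → (Fin (3 + 2 * k) → Form X) → Form X

variable {X : Type}

/-- Output of a connective occurrence: negated-output counterparts negate. -/
def applyMode (m : Mode) (b : Bool) : Bool := if m = .negated then !b else b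

def binSem : BinConn → Bool → Bool → Bool
  | .and, a, b => a && b
  | .or, a, b => a || b
  | .imp, a, b => !a || b
  | .iff, a, b => a == b

/-- Classical satisfaction of a formula by a valuation (meaningful for PL
formulas; unreliable connectives are evaluated like their ideal versions). -/
def Form.eval (v : X → Bool) : Form X → Bool
  | .verum => true
  | .falsum => false
  | .var x => v x
  | .not m φ => applyMode m (!(φ.eval v))
  | .bin c m φ ψ => applyMode m (binSem c (φ.eval v) (ψ.eval v))
  | .maj k m f => applyMode m (decide (3 + 2 * k < 2 * ∑ i, ((f i).eval v).toNat))

/-- A PL formula: contains no unreliable connectives. -/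
def Form.IsPL : Form X → Prop
  | .verum => True
  | .falsum => True
  | .var _ => True
  | .not m φ => m ≠ .unreliable ∧ φ.IsPL
  | .bin _ m φ ψ => m ≠ .unreliable ∧ φ.IsPL ∧ ψ.IsPL
  | .maj _ m f => m ≠ .unreliable ∧ ∀ i, (f i).IsPL

/-- The outcome relation `φ ⊳ ψ` between PL formulas `φ` and c-formulas `ψ`. -/
inductive Outcome : Form X → Form X → Prop where
  | refl (φ : Form X) : φ.IsPL → Outcome φ φ
  | notC {m : Mode} {φ ψ : Form X} (hm : m ≠ .unreliable) :
      Outcome φ ψ → Outcome (.not m φ) (.not m ψ)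
  | binC {c : BinConn} {m : Mode} {φ₁ φ₂ ψ₁ ψ₂ : Form X} (hm : m ≠ .unreliable) :
      Outcome φ₁ ψ₁ → Outcome φ₂ ψ₂ → Outcome (.bin c m φ₁ φ₂) (.bin c m ψ₁ ψ₂)
  | majC {k : ℕ} {m : Mode} {f g : Fin (3 + 2 * k) → Form X} (hm : m ≠ .unreliable) :
      (∀ i, Outcome (f i) (g i)) → Outcome (.maj k m f) (.maj k m g)
  | notOk {φ ψ : Form X} : Outcome φ ψ → Outcome (.not .ideal φ) (.not .unreliable ψ)
  | notFail {φ ψ : Form X} : Outcome φ ψ → Outcome (.not .negated φ) (.not .unreliable ψ)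
  | binOk {c : BinConn} {φ₁ φ₂ ψ₁ ψ₂ : Form X} :
      Outcome φ₁ ψ₁ → Outcome φ₂ ψ₂ →
      Outcome (.bin c .ideal φ₁ φ₂) (.bin c .unreliable ψ₁ ψ₂)
  | binFail {c : BinConn} {φ₁ φ₂ ψ₁ ψ₂ : Form X} :
      Outcome φ₁ ψ₁ → Outcome φ₂ ψ₂ →
      Outcome (.bin c .negated φ₁ φ₂) (.bin c .unreliable ψ₁ ψ₂)
  | majOk {k : ℕ} {f g : Fin (3 + 2 * k) → Form X} :
      (∀ i, Outcome (f i) (g i)) → Outcome (.maj k .ideal f) (.maj k .unreliable g)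
  | majFail {k : ℕ} {f g : Fin (3 + 2 * k) → Form X} :
      (∀ i, Outcome (f i) (g i)) → Outcome (.maj k .negated f) (.maj k .unreliable g)

/-- The probability factor contributed by one connective occurrence:
the circuit connective has mode `m`, the outcome one mode `m'`. -/
noncomputable def modeFactor (m m' : Mode) : Polynomial ℝ :=
  match m, m' with
  | .unreliable, .ideal => Polynomial.X
  | .unreliable, .negated => 1 - Polynomial.X
  | .ideal, .ideal => 1
  | .negated, .negated => 1
  | _, _ => 0

/-- `Pν[ψ ▷ φ]`, written `prob ψ φ`: the probability polynomial of outcome `φ`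
of the c-formula `ψ` (junk value `0` when `φ` is not an outcome of `ψ`). -/
noncomputable def Form.prob [DecidableEq X] (ψ φ : Form X) : Polynomial ℝ :=
  match ψ, φ with
  | .verum, .verum => 1
  | .falsum, .falsum => 1
  | .var x, .var y => if x = y then 1 else 0
  | .not m ψ, .not m' φ => modeFactor m m' * ψ.prob φ
  | .bin c m ψ₁ ψ₂, .bin c' m' φ₁ φ₂ =>
      if c = c' then modeFactor m m' * (ψ₁.prob φ₁ * ψ₂.prob φ₂) else 0
  | .maj k m g, .maj k' m' f =>
      if h : k = k' then
        modeFactor m m' * ∏ i : Fin (3 + 2 * k), (g i).prob (f (Fin.cast (by omega) i))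
      else 0
  | _, _ => 0
termination_by structural ψ

/-- Number of occurrences of unreliable connectives in a formula. -/
def Form.unrelCount : Form X → ℕ
  | .verum => 0
  | .falsum => 0
  | .var _ => 0
  | .not m φ => (if m = .unreliable then 1 else 0) + φ.unrelCount
  | .bin _ m φ ψ => (if m = .unreliable then 1 else 0) + φ.unrelCount + ψ.unrelCount
  | .maj _ m f => (if m = .unreliable then 1 else 0) + ∑ i, (f i).unrelCount

/-- Number of occurrences of unreliable connectives of the c-formula `ψ` that
are replaced by their ideal counterparts in the outcome `φ` (junk value when
`φ` is not an outcome of `ψ`). -/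
def Form.idealRepl (ψ φ : Form X) : ℕ :=
  match ψ, φ with
  | .not m ψ, .not m' φ =>
      (if m = .unreliable ∧ m' = .ideal then 1 else 0) + ψ.idealRepl φ
  | .bin _ m ψ₁ ψ₂, .bin _ m' φ₁ φ₂ =>
      (if m = .unreliable ∧ m' = .ideal then 1 else 0) + ψ₁.idealRepl φ₁ + ψ₂.idealRepl φ₂
  | .maj k m g, .maj k' m' f =>
      (if m = .unreliable ∧ m' = .ideal then 1 else 0) +
        (if h : k = k' then ∑ i : Fin (3 + 2 * k), (g i).idealRepl (f (Fin.cast (by omega) i))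
         else 0)
  | _, _ => 0
termination_by structural ψ

/-- `P^v_ψ(ν)`: the aggregated probability, at reliability rate `ν`, of the
outcomes of `ψ` satisfied by the valuation `v`. -/
noncomputable def Pval [DecidableEq X] (v : X → Bool) (ψ : Form X) (ν : ℝ) : ℝ :=
  ∑ᶠ φ ∈ {φ : Form X | Outcome φ ψ ∧ φ.eval v = true}, (ψ.prob φ).eval ν

/-- `P^v_ψ` as a polynomial in `ℝ[ν]`. -/
noncomputable def Ppoly [DecidableEq X] (v : X → Bool) (ψ : Form X) : Polynomial ℝ :=
  ∑ᶠ φ ∈ {φ : Form X | Outcome φ ψ ∧ φ.eval v = true}, ψ.prob φ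

/-- An interpretation `I = (v, ρ)` of UCL. -/
structure Interp (X : Type) where
  v : X → Bool
  nu : ℝ
  mu : ℝ
  nu_gt : 1 / 2 < nu
  nu_le : nu ≤ 1
  mu_gt : 1 / 2 < mu
  mu_le : mu ≤ 1

/-- Satisfaction of a c-formula by an interpretation. -/
def satC [DecidableEq X] (I : Interp X) (ψ : Form X) : Prop :=
  I.mu ≤ Pval I.v ψ I.nu

/-- Satisfaction of the a-formula `μ ≤ P` (with `P` a polynomial in `ν` with
integer coefficients) by an interpretation. -/
def satA (I : Interp X) (P : Polynomial ℤ) : Prop :=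
  I.mu ≤ (P.map (Int.castRingHom ℝ)).eval I.nu

/-- `Γ ⊨_UCL ψ` for a finite set `Γ` of a-formulas and a c-formula `ψ`. -/
def entails [DecidableEq X] (Γ : List (Polynomial ℤ)) (ψ : Form X) : Prop :=
  ∀ I : Interp X, (∀ P ∈ Γ, satA I P) → satC I ψ

/-- UCL-satisfiability of a c-formula. -/
def UCLSat [DecidableEq X] (ψ : Form X) : Prop :=
  ∃ I : Interp X, satC I ψ

end UCL

/-!
A c-formula has only finitely many outcomes, so `P^v_ψ` is a polynomial in `ν` and hence
continuous. If `1/2 < μ ≤ P^v_ψ(ν)` with `ν ∈ (1/2, 1]`, the strict inequality `1/2 < P^v_ψ`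
persists slightly to the left of `ν`, where rationals `ν̄ ∈ (1/2, 1]` can be picked; any rational
`μ̄` strictly between `1/2` and `min 1 (P^v_ψ(ν̄))` then completes the witness.
-/

open Topology in
theorem Real.exists_rat_mem_Ioc_lt_of_continuousAt {f : ℝ → ℝ} {a b x c : ℝ}
    (hf : ContinuousAt f x) (hx : x ∈ Set.Ioc a b) (hc : c < f x) :
    ∃ q : ℚ, (q : ℝ) ∈ Set.Ioc a b ∧ c < f q := by
  have hnhds : {y | c < f y} ∈ 𝓝[<] x :=
    nhdsWithin_le_nhds (hf.eventually (lt_mem_nhds hc))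
  obtain ⟨l, ⟨hal, hlx⟩, hIoo⟩ := (mem_nhdsLT_iff_exists_mem_Ico_Ioo_subset hx.1).mp hnhds
  obtain ⟨q, hlq, hqx⟩ := exists_rat_btwn hlx
  exact ⟨q, ⟨hal.trans_lt hlq, hqx.le.trans hx.2⟩, hIoo ⟨hlq, hqx⟩⟩

namespace UCL

variable {X : Type}

instance : Fintype Mode :=
  ⟨{.ideal, .negated, .unreliable}, by intro m; cases m <;> simp⟩

theorem finite_setOf_outcome (ψ : Form X) : {φ : Form X | Outcome φ ψ}.Finite := by
  induction ψ with
  | verum =>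
    refine (Set.finite_singleton Form.verum).subset ?_
    rintro φ ⟨⟩; rfl
  | falsum =>
    refine (Set.finite_singleton Form.falsum).subset ?_
    rintro φ ⟨⟩; rfl
  | var x =>
    refine (Set.finite_singleton (Form.var x)).subset ?_
    rintro φ ⟨⟩; rfl
  | not m ψ ih =>
    refine ((Set.finite_univ.prod ih).image fun p : Mode × Form X => Form.not p.1 p.2).subset ?_
    intro φ h
    cases h with
    | refl _ hPL => exact ⟨(m, ψ), ⟨trivial, .refl ψ hPL.2⟩, rfl⟩
    | notC _ h | notOk h | notFail h => exact ⟨(_, _), ⟨trivial, h⟩, rfl⟩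
  | bin c m ψ₁ ψ₂ ih₁ ih₂ =>
    refine ((Set.finite_univ.prod (ih₁.prod ih₂)).image
      fun p : Mode × Form X × Form X => Form.bin c p.1 p.2.1 p.2.2).subset ?_
    intro φ h
    cases h with
    | refl _ hPL => exact ⟨(m, ψ₁, ψ₂), ⟨trivial, .refl _ hPL.2.1, .refl _ hPL.2.2⟩, rfl⟩
    | binC _ h₁ h₂ | binOk h₁ h₂ | binFail h₁ h₂ => exact ⟨(_, _, _), ⟨trivial, h₁, h₂⟩, rfl⟩
  | maj k m f ih =>
    refine ((Set.finite_univ.prod (Set.Finite.pi ih)).image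
      fun p : Mode × (Fin (3 + 2 * k) → Form X) => Form.maj k p.1 p.2).subset ?_
    intro φ h
    cases h with
    | refl _ hPL => exact ⟨(m, f), ⟨trivial, fun i _ => .refl _ (hPL.2 i)⟩, rfl⟩
    | majC _ h | majOk h | majFail h => exact ⟨(_, _), ⟨trivial, fun i _ => h i⟩, rfl⟩

theorem Pval_eq_eval_Ppoly [DecidableEq X] (v : X → Bool) (ψ : Form X) (ν : ℝ) :
    Pval v ψ ν = (Ppoly v ψ).eval ν :=
  ((Polynomial.evalRingHom ν).toAddMonoidHom.map_finsum_mem _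
    ((finite_setOf_outcome ψ).subset fun _ hφ => hφ.1)).symm

end UCL

open UCL in
/-- Rational witnesses suffice for the model witness problem: if `ψ` is
UCL-satisfiable then there are a valuation `v` and rationals `ν̄, μ̄` in
`(1/2, 1]` with `μ̄ ≤ P^v_ψ(ν̄)`, i.e. the interpretation `(v, ρ)` with
`ρ(ν) = ν̄`, `ρ(μ) = μ̄` satisfies `ψ`. -/
theorem stmt2 {X : Type} [DecidableEq X] (ψ : Form X) (h : UCLSat ψ) :
    ∃ (v : X → Bool) (nubar mubar : ℚ),
      1 / 2 < nubar ∧ nubar ≤ 1 ∧ 1 / 2 < mubar ∧ mubar ≤ 1 ∧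
        (mubar : ℝ) ≤ Pval v ψ (nubar : ℝ) := by
  obtain ⟨I, hsat⟩ := h
  have hP : 1 / 2 < (Ppoly I.v ψ).eval I.nu := by
    rw [← Pval_eq_eval_Ppoly]
    exact I.mu_gt.trans_le hsat
  obtain ⟨q, ⟨hq_gt, hq_le⟩, hPq⟩ := Real.exists_rat_mem_Ioc_lt_of_continuousAt
    (Ppoly I.v ψ).continuous.continuousAt ⟨I.nu_gt, I.nu_le⟩ hP
  obtain ⟨r, hr_gt, hr_lt⟩ := exists_rat_btwn (lt_min one_half_lt_one hPq)
  refine ⟨I.v, q, r, by simpa [← Rat.cast_lt (K := ℝ)] using hq_gt, by exact_mod_cast hq_le,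
    by simpa [← Rat.cast_lt (K := ℝ)] using hr_gt,
    by exact_mod_cast hr_lt.le.trans (min_le_left _ _), ?_⟩
  rw [Pval_eq_eval_Ppoly]
  exact hr_lt.le.trans (min_le_right _ _)
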